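/- arXiv:math/0512244 — 3 statements merged into one kernel-verified Lean document; each statement's English description precedes it below -/
import Mathlib

section
/- Let (Q,+) be an NK-loop and let f, g, h be special endomorphisms of (Q,+). Then f + (g + h) = (f + g) + h, where addition of endomorphisms is pointwise. Moreover -f is a special endomorphism of (Q,+), f + (-f) = 0, and f + 0 = f. -/
/- Preamble: NK-loops, written additively.
   A loop is a set with `+`, a neutral element `0`, and unique left/right
   solvability.  An NK-loop is a loop in which every element decomposes as
   `x = u + v = v + u` with `u` in the nucleus and `v` in the Moufang center.
   Every NK-loop is a diassociative Moufang loop, so every element has a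
   (uniquely determined) two-sided inverse `-x`, which we include in the
   structure. -/

universe u

section Preamble
variable {Q : Type u}

/-- `a` belongs to the nucleus `N(Q,+)`. -/
def inNucleus [Add Q] (a : Q) : Prop :=
  ∀ x y : Q, (a + x) + y = a + (x + y) ∧ (x + a) + y = x + (a + y) ∧
    (x + y) + a = x + (y + a)

/-- `a` belongs to the Moufang center `K(Q,+)`. -/
def inMoufangCenter [Add Q] (a : Q) : Prop :=
  ∀ x y : Q, (a + a) + (x + y) = (a + x) + (a + y)

/-- `a` belongs to the center `Z(Q,+) = N(Q,+) ∩ K(Q,+)`. -/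
def inCenter [Add Q] (a : Q) : Prop := inNucleus a ∧ inMoufangCenter a

/-- An NK-loop `(Q,+)`: a loop in which every element decomposes as a sum
    `x = u + v = v + u` with `u ∈ N(Q,+)` and `v ∈ K(Q,+)`. -/
class NKLoop (Q : Type u) extends Add Q, Zero Q, Neg Q where
  zero_add : ∀ x : Q, 0 + x = x
  add_zero : ∀ x : Q, x + 0 = x
  exu_left : ∀ a b : Q, ∃! x : Q, a + x = b
  exu_right : ∀ a b : Q, ∃! y : Q, y + a = b
  neg_add_cancel : ∀ x : Q, -x + x = 0
  add_neg_cancel : ∀ x : Q, x + -x = 0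
  nk_decomp : ∀ x : Q, ∃ u v : Q, inNucleus u ∧ inMoufangCenter v ∧
      x = u + v ∧ x = v + u

variable [Add Q] [Zero Q] [Neg Q]

/-- Natural multiple `n • x`. -/
def nsmulL : ℕ → Q → Q
  | 0, _ => 0
  | n + 1, x => x + nsmulL n x

/-- Integer multiple `m • x` (unambiguous by diassociativity). -/
def zsmulL : ℤ → Q → Q
  | Int.ofNat n, x => nsmulL n x
  | Int.negSucc n, x => -(nsmulL (n + 1) x)

/-- `f` is an endomorphism of `(Q,+)`. -/
def IsEndo (f : Q → Q) : Prop := ∀ x y : Q, f (x + y) = f x + f y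

/-- `a` belongs to the center of the (commutative) subloop `(K(Q,+),+)`:
    `a ∈ K(Q,+)` and `a` satisfies the nucleus conditions relative to
    elements of `K(Q,+)`. -/
def inCenterOfK (a : Q) : Prop :=
  inMoufangCenter a ∧ ∀ x y : Q, inMoufangCenter x → inMoufangCenter y →
    (a + x) + y = a + (x + y) ∧ (x + a) + y = x + (a + y) ∧
      (x + y) + a = x + (y + a)

/-- `f` is a special endomorphism of the NK-loop `(Q,+)`:
    `f(Q) ⊆ K(Q,+)`, the restriction of `f` to `K(Q,+)` is a quasicentral
    endomorphism of the (commutative) loop `(K(Q,+),+)`, and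
    `f(N(Q,+)) ⊆ N(Q,+)`. -/
def IsSpecial (f : Q → Q) : Prop :=
  IsEndo f ∧ (∀ x : Q, inMoufangCenter (f x)) ∧
  (∃ m : ℤ, ∀ x : Q, inMoufangCenter x → inCenterOfK (zsmulL m x + f x)) ∧
  (∀ x : Q, inNucleus x → inNucleus (f x))

/-- `f` satisfies condition (F): `-x + f(x) ∈ K(Q,+)` and
    `x + f(x) ∈ N(Q,+)` for all `x`. -/
def SatisfiesF (f : Q → Q) : Prop :=
  ∀ x : Q, inMoufangCenter (-x + f x) ∧ inNucleus (x + f x)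

end Preamble

/-!
For a special endomorphism `f`, write `x = u + v` with `u ∈ N` and `v ∈ K`. Then `f u` lies in
`N ∩ K`, the center, and central summands can be pulled out of any sum, so associativity of
`f + (g + h)` reduces to the values at `v ∈ K`. There quasicentrality gives `f v = (-m) v + c`
with `c` in the center of the commutative Moufang loop `K`; integer multiples of `v` associate,
and center elements of `K` can be moved to the right of a sum, so both bracketings reach the
same normal form. For `-f`: `K` is a subloop on which negation is additive, and the nucleus
of a loop, like the nucleus of its subloop `K`, is closed under inverses.
-/

namespace NKLoop

variable {Q : Type u} [NKLoop Q] {a b c : Q}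

theorem add_left_cancel (h : a + b = a + c) : b = c := by
  obtain ⟨_, _, hu⟩ := exu_left a (a + c)
  exact (hu b h).trans (hu c rfl).symm

theorem add_right_cancel (h : b + a = c + a) : b = c := by
  obtain ⟨_, _, hu⟩ := exu_right a (c + a)
  exact (hu b h).trans (hu c rfl).symm

theorem eq_neg_of_add_eq_zero_right (h : a + b = 0) : b = -a :=
  add_left_cancel (h.trans (add_neg_cancel a).symm)

theorem neg_neg (a : Q) : -(-a) = a :=
  (eq_neg_of_add_eq_zero_right (neg_add_cancel a)).symm

theorem neg_zero : -(0 : Q) = 0 :=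
  (eq_neg_of_add_eq_zero_right (zero_add (0 : Q))).symm

end NKLoop

namespace inMoufangCenter

open NKLoop (add_left_cancel)

variable {Q : Type u} [NKLoop Q] {a b : Q}

theorem add_self_add (ha : inMoufangCenter a) (y : Q) : (a + a) + y = a + (a + y) := by
  simpa only [NKLoop.zero_add, NKLoop.add_zero] using ha 0 y

theorem add_comm (ha : inMoufangCenter a) (t : Q) : a + t = t + a := by
  obtain ⟨y, rfl, -⟩ := NKLoop.exu_left a t
  simpa only [NKLoop.add_zero, ha.add_self_add] using ha y 0

theorem add_neg_cancel_left (ha : inMoufangCenter a) (y : Q) : a + (-a + y) = y := by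
  have h := ha (-a) y
  rw [NKLoop.add_neg_cancel, NKLoop.zero_add, ha.add_self_add] at h
  exact add_left_cancel h

theorem neg_add_cancel_left (ha : inMoufangCenter a) (y : Q) : -a + (a + y) = y :=
  add_left_cancel (ha.add_neg_cancel_left (a + y))

theorem add_add_eq_add_self_add (ha : inMoufangCenter a) (x y : Q) :
    (a + x) + y = (a + a) + (x + (-a + y)) := by
  rw [ha x (-a + y), ha.add_neg_cancel_left]

theorem add_self_add_neg_add_neg_add (ha : inMoufangCenter a) (y : Q) :
    (a + a) + (-a + (-a + y)) = y := by
  rw [ha.add_self_add, ha.add_neg_cancel_left, ha.add_neg_cancel_left]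

theorem neg_add_neg_add (ha : inMoufangCenter a) (y : Q) :
    (-a + -a) + y = -a + (-a + y) := by
  have h := ha (-a + -a) y
  rw [ha.add_neg_cancel_left, ha.neg_add_cancel_left] at h
  exact add_left_cancel (h.trans (ha.add_self_add_neg_add_neg_add y).symm)

theorem neg (ha : inMoufangCenter a) : inMoufangCenter (-a) := by
  intro x y
  have h := ha (-a + x) (-a + y)
  rw [ha.add_neg_cancel_left, ha.add_neg_cancel_left,
    ← ha.add_self_add_neg_add_neg_add (x + y), ← ha.neg_add_neg_add] at h
  exact add_left_cancel h.symm

theorem add_self (ha : inMoufangCenter a) : inMoufangCenter (a + a) := by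
  have hdouble (u : Q) : ((a + a) + (a + a)) + u = (a + a) + ((a + a) + u) := by
    rw [ha.add_self_add (a + a), ha.add_add_eq_add_self_add (a + (a + a)),
      ha.add_add_eq_add_self_add (a + a), ha.add_self_add_neg_add_neg_add]
  intro x y
  rw [ha.add_self_add x, ha.add_self_add y, ← ha (a + x) (a + y), ← ha x y, hdouble]

theorem neg_add_self_add (ha : inMoufangCenter a) (t : Q) : -(a + a) + t = -a + (-a + t) :=
  add_left_cancel (a := a + a) <| by
    rw [ha.add_self.add_neg_cancel_left, ha.add_self_add_neg_add_neg_add]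

theorem add (ha : inMoufangCenter a) (hb : inMoufangCenter b) : inMoufangCenter (a + b) := by
  intro x y
  calc ((a + b) + (a + b)) + (x + y)
      = ((a + a) + (b + b)) + (x + y) := by rw [ha b b]
    _ = ((a + a) + (a + a)) + ((b + b) + (-a + (-a + (x + y)))) := by
      rw [ha.add_self.add_add_eq_add_self_add, ha.neg_add_self_add]
    _ = ((a + b) + x) + ((a + b) + y) := by
      rw [ha.add_add_eq_add_self_add b x, ha.add_add_eq_add_self_add b y, ← ha.add_self,
        ← hb, ← ha.neg x y, ha.neg_add_neg_add]

theorem neg_add (ha : inMoufangCenter a) (hb : inMoufangCenter b) : -(a + b) = -a + -b := by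
  refine (NKLoop.eq_neg_of_add_eq_zero_right ?_).symm
  rw [ha.add_add_eq_add_self_add, ← ha.neg_add_self_add, ha.add_self.neg.add_comm,
    hb.add_neg_cancel_left, NKLoop.add_neg_cancel]

end inMoufangCenter

section Multiples

variable {Q : Type u} [NKLoop Q] {v : Q}

theorem inMoufangCenter.nsmul (hv : inMoufangCenter v) : ∀ n : ℕ, inMoufangCenter (nsmulL n v)
  | 0 => fun x y => by simp only [nsmulL, NKLoop.zero_add]
  | n + 1 => hv.add (hv.nsmul n)

theorem inMoufangCenter.zsmul (hv : inMoufangCenter v) : ∀ m : ℤ, inMoufangCenter (zsmulL m v)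
  | Int.ofNat n => hv.nsmul n
  | Int.negSucc n => (hv.nsmul (n + 1)).neg

theorem zsmulL_neg (v : Q) : ∀ m : ℤ, zsmulL (-m) v = -(zsmulL m v)
  | Int.ofNat 0 => NKLoop.neg_zero.symm
  | Int.ofNat (_ + 1) => rfl
  | Int.negSucc _ => (NKLoop.neg_neg _).symm

theorem inMoufangCenter.add_zsmulL (hv : inMoufangCenter v) :
    ∀ j : ℤ, v + zsmulL j v = zsmulL (j + 1) v
  | Int.ofNat _ => rfl
  | Int.negSucc 0 => by
      change v + -(v + 0) = 0
      rw [NKLoop.add_zero, NKLoop.add_neg_cancel]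
  | Int.negSucc (n + 1) => by
      change v + -(v + nsmulL (n + 1) v) = -(nsmulL (n + 1) v)
      rw [hv.neg_add (hv.nsmul (n + 1)), hv.add_neg_cancel_left]

theorem inMoufangCenter.neg_add_zsmulL (hv : inMoufangCenter v) (j : ℤ) :
    -v + zsmulL j v = zsmulL (j - 1) v := by
  rw [← hv.neg_add_cancel_left (zsmulL (j - 1) v), hv.add_zsmulL, sub_add_cancel]

theorem inMoufangCenter.zsmulL_add (hv : inMoufangCenter v) (i j : ℤ) :
    zsmulL i v + zsmulL j v = zsmulL (i + j) v := by
  induction i using Int.induction_on generalizing j with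
  | zero => rw [zero_add]; exact NKLoop.zero_add _
  | succ i ih =>
    rw [← hv.add_zsmulL, ← sub_add_cancel j 1, ← hv.add_zsmulL (j - 1), ← hv (zsmulL i v),
      ih, hv.add_self_add, hv.add_zsmulL, hv.add_zsmulL]
    congr 1; ring
  | pred i ih =>
    rw [← hv.neg_add_zsmulL, ← add_sub_cancel_right j 1, ← hv.neg_add_zsmulL (j + 1),
      ← hv.neg (zsmulL _ v), ih, hv.neg_add_neg_add, hv.neg_add_zsmulL, hv.neg_add_zsmulL]
    congr 1; ring

end Multiples

section Nucleus

variable {Q : Type u} [NKLoop Q] {a b c : Q}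

/-- For `S = univ` this is `inNucleus`; `inCenterOfK a` is `inMoufangCenter a` together with
`inNucleusOn {x | inMoufangCenter x} a`. -/
def inNucleusOn (S : Set Q) (a : Q) : Prop :=
  ∀ x y : Q, x ∈ S → y ∈ S →
    (a + x) + y = a + (x + y) ∧ (x + a) + y = x + (a + y) ∧ (x + y) + a = x + (y + a)

theorem inNucleusOn.neg {S : Set Q} (hS : ∀ x ∈ S, ∀ y ∈ S, x + y ∈ S) (hna : -a ∈ S)
    (ha : inNucleusOn S a) : inNucleusOn S (-a) := by
  have add_neg_cancel_left (t : Q) (ht : t ∈ S) : a + (-a + t) = t := by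
    rw [← (ha (-a) t hna ht).1, NKLoop.add_neg_cancel, NKLoop.zero_add]
  have neg_add_cancel_right (t : Q) (ht : t ∈ S) : (t + -a) + a = t := by
    rw [(ha t (-a) ht hna).2.2, NKLoop.neg_add_cancel, NKLoop.add_zero]
  intro x y hx hy
  refine ⟨?_, ?_, ?_⟩
  · apply NKLoop.add_left_cancel (a := a)
    rw [← (ha (-a + x) y (hS _ hna _ hx) hy).1, add_neg_cancel_left x hx,
      add_neg_cancel_left (x + y) (hS _ hx _ hy)]
  · calc (x + -a) + y = (x + -a) + (a + (-a + y)) := by rw [add_neg_cancel_left y hy]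
      _ = ((x + -a) + a) + (-a + y) := ((ha _ _ (hS _ hx _ hna) (hS _ hna _ hy)).2.1).symm
      _ = x + (-a + y) := by rw [neg_add_cancel_right x hx]
  · apply NKLoop.add_right_cancel (a := a)
    rw [neg_add_cancel_right (x + y) (hS _ hx _ hy), (ha x (y + -a) hx (hS _ hy _ hna)).2.2,
      neg_add_cancel_right y hy]

theorem inNucleus.neg (ha : inNucleus a) : inNucleus (-a) := by
  have h : inNucleusOn Set.univ (-a) :=
    inNucleusOn.neg (fun _ _ _ _ => trivial) trivial fun x y _ _ => ha x y
  exact fun x y => h x y trivial trivial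

theorem inNucleus.add (ha : inNucleus a) (hb : inNucleus b) : inNucleus (a + b) := by
  intro x y
  refine ⟨?_, ?_, ?_⟩
  · rw [(ha b x).1, (ha (b + x) y).1, (hb x y).1, (ha b (x + y)).1]
  · rw [← (ha x b).2.1, (hb (x + a) y).2.1, (ha x (b + y)).2.1, (ha b y).1]
  · rw [← (ha (x + y) b).2.1, (ha x y).2.2, (hb x (y + a)).2.2, (ha y b).2.1]

end Nucleus

namespace inCenterOfK

variable {Q : Type u} [NKLoop Q] {a b c c' : Q}

theorem neg (hc : inCenterOfK c) : inCenterOfK (-c) :=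
  ⟨hc.1.neg, inNucleusOn.neg (S := {x | inMoufangCenter x}) (fun _ hx _ hy => hx.add hy) hc.1.neg
    hc.2⟩

theorem add_add (hc : inCenterOfK c) (ha : inMoufangCenter a) (hb : inMoufangCenter b) :
    a + (b + c) = (a + b) + c :=
  ((hc.2 a b ha hb).2.2).symm

theorem add_right_comm (hc : inCenterOfK c) (ha : inMoufangCenter a) (hb : inMoufangCenter b) :
    (a + c) + b = (a + b) + c := by
  rw [(hc.2 a b ha hb).2.1, hc.1.add_comm b, hc.add_add ha hb]

theorem add_add_add (hc : inCenterOfK c) (hc' : inCenterOfK c') (ha : inMoufangCenter a)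
    (hb : inMoufangCenter b) : (a + c) + (b + c') = ((a + b) + c) + c' := by
  rw [hc'.add_add (ha.add hc.1) hb, hc.add_right_comm ha hb]

end inCenterOfK

theorem add_assoc_of_inCenterOfK {Q : Type u} [NKLoop Q] {p q r c₁ c₂ c₃ : Q}
    (hp : inMoufangCenter p) (hq : inMoufangCenter q) (hr : inMoufangCenter r)
    (hc₁ : inCenterOfK c₁) (hc₂ : inCenterOfK c₂) (hc₃ : inCenterOfK c₃)
    (hpqr : p + (q + r) = (p + q) + r) :
    (p + c₁) + ((q + c₂) + (r + c₃)) = ((p + c₁) + (q + c₂)) + (r + c₃) := by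
  have hpq := hp.add hq
  calc (p + c₁) + ((q + c₂) + (r + c₃))
      = (p + c₁) + (((q + r) + c₂) + c₃) := by rw [hc₂.add_add_add hc₃ hq hr]
    _ = (((p + (q + r)) + c₁) + c₂) + c₃ := by
      rw [hc₃.add_add (hp.add hc₁.1) ((hq.add hr).add hc₂.1),
        hc₁.add_add_add hc₂ hp (hq.add hr)]
    _ = ((((p + q) + c₁) + r) + c₂) + c₃ := by rw [hpqr, hc₁.add_right_comm hpq hr]
    _ = ((p + c₁) + (q + c₂)) + (r + c₃) := by
      rw [hc₁.add_add_add hc₂ hp hq, hc₃.add_add ((hpq.add hc₁.1).add hc₂.1) hr,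
        hc₂.add_right_comm (hpq.add hc₁.1) hr]

namespace inCenter

variable {Q : Type u} [NKLoop Q] {z z' : Q}

theorem add (hz : inCenter z) (hz' : inCenter z') : inCenter (z + z') :=
  ⟨hz.1.add hz'.1, hz.2.add hz'.2⟩

theorem add_add_add_comm (hz : inCenter z) (hz' : inCenter z') (a b : Q) :
    (z + a) + (z' + b) = (z + z') + (a + b) := by
  rw [(hz.1 a (z' + b)).1, ← (hz'.1 a b).2.1, ← hz'.2.add_comm a, (hz'.1 a b).1,
    (hz.1 z' (a + b)).1]

end inCenter

namespace IsSpecial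

variable {Q : Type u} [NKLoop Q] {f g h : Q → Q}

theorem inCenter_of_inNucleus (hf : IsSpecial f) {u : Q} (hu : inNucleus u) :
    inCenter (f u) :=
  ⟨hf.2.2.2 u hu, hf.2.1 u⟩

theorem exists_eq_zsmulL_add (hf : IsSpecial f) {v : Q} (hv : inMoufangCenter v) :
    ∃ (m : ℤ) (c : Q), inCenterOfK c ∧ f v = zsmulL m v + c := by
  obtain ⟨m, hm⟩ := hf.2.2.1
  refine ⟨-m, _, hm v hv, ?_⟩
  rw [zsmulL_neg, (hv.zsmul m).neg_add_cancel_left]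

theorem add_assoc_of_inMoufangCenter (hf : IsSpecial f) (hg : IsSpecial g) (hh : IsSpecial h)
    {v : Q} (hv : inMoufangCenter v) : f v + (g v + h v) = (f v + g v) + h v := by
  obtain ⟨i, c₁, hc₁, hfv⟩ := hf.exists_eq_zsmulL_add hv
  obtain ⟨j, c₂, hc₂, hgv⟩ := hg.exists_eq_zsmulL_add hv
  obtain ⟨k, c₃, hc₃, hhv⟩ := hh.exists_eq_zsmulL_add hv
  have hijk : zsmulL i v + (zsmulL j v + zsmulL k v) = (zsmulL i v + zsmulL j v) + zsmulL k v := by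
    rw [hv.zsmulL_add, hv.zsmulL_add, hv.zsmulL_add, hv.zsmulL_add, add_assoc]
  rw [hfv, hgv, hhv]
  exact add_assoc_of_inCenterOfK (hv.zsmul i) (hv.zsmul j) (hv.zsmul k) hc₁ hc₂ hc₃ hijk

theorem add_assoc (hf : IsSpecial f) (hg : IsSpecial g) (hh : IsSpecial h) (x : Q) :
    f x + (g x + h x) = (f x + g x) + h x := by
  obtain ⟨u, v, hu, hv, rfl, -⟩ := NKLoop.nk_decomp x
  have hfu := hf.inCenter_of_inNucleus hu
  have hgu := hg.inCenter_of_inNucleus hu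
  have hhu := hh.inCenter_of_inNucleus hu
  calc f (u + v) + (g (u + v) + h (u + v))
      = (f u + f v) + ((g u + g v) + (h u + h v)) := by rw [hf.1, hg.1, hh.1]
    _ = (f u + (g u + h u)) + (f v + (g v + h v)) := by
      rw [hgu.add_add_add_comm hhu, hfu.add_add_add_comm (hgu.add hhu)]
    _ = ((f u + g u) + h u) + ((f v + g v) + h v) := by
      rw [← (hfu.1 (g u) (h u)).1, hf.add_assoc_of_inMoufangCenter hg hh hv]
    _ = ((f u + f v) + (g u + g v)) + (h u + h v) := by
      rw [← (hfu.add hgu).add_add_add_comm hhu, hfu.add_add_add_comm hgu]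
    _ = (f (u + v) + g (u + v)) + h (u + v) := by rw [hf.1, hg.1, hh.1]

theorem neg (hf : IsSpecial f) : IsSpecial fun x => -(f x) := by
  obtain ⟨hend, hK, ⟨m, hm⟩, hN⟩ := hf
  refine ⟨fun x y => ?_, fun x => (hK x).neg, ⟨-m, fun x hx => ?_⟩, fun x hx => (hN x hx).neg⟩
  · show -f (x + y) = -f x + -f y
    rw [hend, (hK x).neg_add (hK y)]
  · rw [zsmulL_neg, ← (hx.zsmul m).neg_add (hK x)]
    exact (hm x hx).neg

end IsSpecial

theorem special_add_assoc_neg {Q : Type u} [NKLoop Q] (f g h : Q → Q)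
    (hf : IsSpecial f) (hg : IsSpecial g) (hh : IsSpecial h) :
    ((fun x : Q => f x + (g x + h x)) = (fun x : Q => (f x + g x) + h x)) ∧
    IsSpecial (fun x : Q => -(f x)) ∧
    ((fun x : Q => f x + -(f x)) = (fun _ : Q => (0 : Q))) ∧
    ((fun x : Q => f x + (0 : Q)) = f) :=
  ⟨funext (hf.add_assoc hg hh), hf.neg, funext fun x => NKLoop.add_neg_cancel (f x),
    funext fun x => NKLoop.add_zero (f x)⟩
end

section
/- Let (Q,+) be an NK-loop and let f be an endomorphism of (Q,+) satisfying condition (F). Define h : Q → Q by h(x) = -x + f(x) for all x ∈ Q. Then h is a special endomorphism of (Q,+). -/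
/- Preamble: NK-loops, written additively.
   A loop is a set with `+`, a neutral element `0`, and unique left/right
   solvability.  An NK-loop is a loop in which every element decomposes as
   `x = u + v = v + u` with `u` in the nucleus and `v` in the Moufang center.
   Every NK-loop is a diassociative Moufang loop, so every element has a
   (uniquely determined) two-sided inverse `-x`, which we include in the
   structure. -/

universe u

namespace NKAux
section Lemmas
variable {Q : Type u} [NKLoop Q]

private lemma zadd (x : Q) : 0 + x = x := NKLoop.zero_add x
private lemma addz (x : Q) : x + 0 = x := NKLoop.add_zero x
private lemma negadd (x : Q) : -x + x = 0 := NKLoop.neg_add_cancel x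
private lemma addneg (x : Q) : x + -x = 0 := NKLoop.add_neg_cancel x

private lemma cancel_left {a x y : Q} (h : a + x = a + y) : x = y := by
  obtain ⟨z, _, hu⟩ := NKLoop.exu_left a (a + y)
  exact (hu x h).trans (hu y rfl).symm

private lemma cancel_right {a x y : Q} (h : x + a = y + a) : x = y := by
  obtain ⟨z, _, hu⟩ := NKLoop.exu_right a (y + a)
  exact (hu x h).trans (hu y rfl).symm

private lemma neg_unique {x z : Q} (h : x + z = 0) : z = -x :=
  cancel_left (h.trans (addneg x).symm)

/-! ### Moufang-center lemmas -/

private lemma K_Lsq {v : Q} (hv : inMoufangCenter v) (w : Q) :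
    (v + v) + w = v + (v + w) := by
  have := hv 0 w; rwa [zadd, addz] at this

private lemma K_comm {v : Q} (hv : inMoufangCenter v) (z : Q) : v + z = z + v := by
  have h1 : ∀ x : Q, (v + v) + x = (v + x) + v := fun x => by
    have := hv x 0; rwa [addz, addz] at this
  obtain ⟨x, hx, -⟩ := NKLoop.exu_left v z
  calc v + z = v + (v + x) := by rw [hx]
    _ = (v + v) + x := (K_Lsq hv x).symm
    _ = (v + x) + v := h1 x
    _ = z + v := by rw [hx]

private lemma K_star {v : Q} (hv : inMoufangCenter v) (x y : Q) :
    (v + x) + (v + y) = v + (v + (x + y)) := by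
  rw [← hv x y, K_Lsq hv]

private lemma K_lip1 {v : Q} (hv : inMoufangCenter v) (w : Q) :
    v + (-v + w) = w := by
  have h := K_star hv (-v) w
  rw [addneg, zadd] at h
  exact (cancel_left h).symm

private lemma K_lip2 {v : Q} (hv : inMoufangCenter v) (w : Q) :
    -v + (v + w) = w := by
  apply cancel_left (a := v)
  rw [K_lip1 hv]

private lemma K_starneg {v : Q} (hv : inMoufangCenter v) (a b : Q) :
    (-v + a) + (-v + b) = -v + (-v + (a + b)) := by
  have h := K_star hv (-v + a) (-v + b)
  rw [K_lip1 hv, K_lip1 hv] at h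
  -- h : a + b = v + (v + ((-v+a)+(-v+b)))
  have h2 : -v + (a + b) = v + ((-v + a) + (-v + b)) := by
    rw [h, K_lip2 hv]
  rw [h2, K_lip2 hv]

private lemma K_Lneg2 {v : Q} (hv : inMoufangCenter v) (w : Q) :
    (-v + -v) + w = -v + (-v + w) := by
  have h := K_star hv (-v + -v) w
  rw [K_lip1 hv, K_lip2 hv] at h
  -- h : w = v + (v + ((-v + -v) + w))
  have h2 : -v + w = v + ((-v + -v) + w) := by
    conv_lhs => rw [h]
    rw [K_lip2 hv]
  have h3 : -v + (-v + w) = (-v + -v) + w := by rw [h2, K_lip2 hv]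
  exact h3.symm

private lemma K_neg {v : Q} (hv : inMoufangCenter v) : inMoufangCenter (-v) := by
  intro x y
  rw [K_Lneg2 hv, K_starneg hv]

private lemma K_rip {v : Q} (hv : inMoufangCenter v) (t : Q) :
    (t + v) + -v = t := by
  calc (t + v) + -v = -v + (t + v) := (K_comm (K_neg hv) (t + v)).symm
    _ = -v + (v + t) := by rw [K_comm hv t]
    _ = t := K_lip2 hv t

private lemma K_formula_i {a : Q} (ha : inMoufangCenter a) (b t : Q) :
    (a + b) + t = a + (a + (b + (-a + t))) := by
  have h := K_star ha b (-a + t)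
  rwa [K_lip1 ha] at h

private lemma K_sum_comm {a b : Q} (ha : inMoufangCenter a) (hb : inMoufangCenter b)
    (t : Q) : (a + b) + t = t + (a + b) := by
  have h2 : t + (a + b) = a + (a + ((-a + t) + b)) := by
    conv_lhs => rw [← K_lip1 ha t]
    exact K_star ha (-a + t) b
  rw [K_formula_i ha b t, h2, K_comm hb]

private lemma K_closed {a b : Q} (ha : inMoufangCenter a) (hb : inMoufangCenter b) :
    inMoufangCenter (a + b) := by
  intro x y
  have hcc : (a + b) + (a + b) = a + (a + (b + b)) := by
    rw [K_formula_i ha b (a + b), K_lip2 ha]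
  calc ((a + b) + (a + b)) + (x + y)
      = (a + (a + (b + b))) + (x + y) := by rw [hcc]
    _ = (a + (a + (b + b))) + (a + (-a + (x + y))) := by rw [K_lip1 ha]
    _ = a + (a + ((a + (b + b)) + (-a + (x + y)))) := K_star ha _ _
    _ = a + (a + ((a + (b + b)) + (a + (-a + (-a + (x + y)))))) := by
        rw [K_lip1 ha (-a + (x+y))]
    _ = a + (a + (a + (a + ((b + b) + (-a + (-a + (x + y))))))) := by
        rw [K_star ha (b + b) (-a + (-a + (x + y)))]
    _ = a + (a + (a + (a + (b + (b + (-a + (-a + (x + y)))))))) := by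
        rw [K_Lsq hb]
    _ = a + (a + (a + (a + (b + (b + ((-a + x) + (-a + y))))))) := by
        rw [K_starneg ha x y]
    _ = a + (a + (a + (a + ((b + (-a + x)) + (b + (-a + y)))))) := by
        rw [K_star hb (-a + x) (-a + y)]
    _ = a + (a + ((a + (b + (-a + x))) + (a + (b + (-a + y))))) := by
        rw [K_star ha (b + (-a + x)) (b + (-a + y))]
    _ = (a + (a + (b + (-a + x)))) + (a + (a + (b + (-a + y)))) := by
        rw [K_star ha (a + (b + (-a + x))) (a + (b + (-a + y)))]
    _ = ((a + b) + x) + ((a + b) + y) := by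
        rw [← K_formula_i ha b x, ← K_formula_i ha b y]

private lemma K_neg_sum {v w : Q} (hv : inMoufangCenter v) (hw : inMoufangCenter w) :
    -(v + w) = -v + -w := by
  symm
  apply neg_unique
  have h := K_starneg hv (v + (v + w)) (-w)
  rw [K_lip2 hv] at h
  -- h : (v + w) + (-v + -w) = -v + (-v + ((v + (v+w)) + -w))
  rw [h, ← K_Lsq hv w, K_rip hw (v + v), K_lip2 hv v, negadd]

/-! ### Nucleus lemmas -/

private lemma nuc1 {n : Q} (hn : inNucleus n) (x y : Q) : (n + x) + y = n + (x + y) :=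
  (hn x y).1
private lemma nuc2 {n : Q} (hn : inNucleus n) (x y : Q) : (x + n) + y = x + (n + y) :=
  (hn x y).2.1
private lemma nuc3 {n : Q} (hn : inNucleus n) (x y : Q) : (x + y) + n = x + (y + n) :=
  (hn x y).2.2

private lemma N_lip1 {n : Q} (hn : inNucleus n) (w : Q) : n + (-n + w) = w := by
  rw [← nuc1 hn, addneg, zadd]

private lemma N_neg {n : Q} (hn : inNucleus n) : inNucleus (-n) := by
  have hx' : ∀ x : Q, (x + -n) + n = x := fun x => by
    rw [nuc3 hn, negadd, addz]
  intro x y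
  refine ⟨?_, ?_, ?_⟩
  · apply cancel_left (a := n)
    rw [← nuc1 hn, ← nuc1 hn, addneg, zadd, N_lip1 hn]
  · have : x + (-n + y) = (x + -n) + y := by
      conv_lhs => rw [← hx' x]
      rw [nuc2 hn, N_lip1 hn]
    exact this.symm
  · apply cancel_right (a := n)
    rw [nuc3 hn, negadd, addz, nuc3 hn, nuc3 hn, negadd, addz]

private lemma N_lip2 {n : Q} (hn : inNucleus n) (w : Q) : -n + (n + w) = w := by
  rw [← nuc1 (N_neg hn), negadd, zadd]

private lemma N_closed {m n : Q} (hm : inNucleus m) (hn : inNucleus n) :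
    inNucleus (m + n) := by
  intro x y
  refine ⟨?_, ?_, ?_⟩
  · calc ((m + n) + x) + y = (m + (n + x)) + y := by rw [nuc1 hm n x]
      _ = m + ((n + x) + y) := nuc1 hm (n + x) y
      _ = m + (n + (x + y)) := by rw [nuc1 hn x y]
      _ = (m + n) + (x + y) := (nuc1 hm n (x + y)).symm
  · calc (x + (m + n)) + y = ((x + m) + n) + y := by rw [nuc2 hm x n]
      _ = (x + m) + (n + y) := nuc2 hn (x + m) y
      _ = x + (m + (n + y)) := nuc2 hm x (n + y)
      _ = x + ((m + n) + y) := by rw [nuc1 hm n y]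
  · calc (x + y) + (m + n) = ((x + y) + m) + n := (nuc2 hm (x + y) n).symm
      _ = (x + (y + m)) + n := by rw [nuc3 hm x y]
      _ = x + ((y + m) + n) := nuc3 hn x (y + m)
      _ = x + (y + (m + n)) := by rw [nuc2 hm y n]

/-! ### Decomposition-based lemmas -/

private lemma neg_decomp1 {x u v : Q} (hu : inNucleus u) (hv : inMoufangCenter v)
    (hx : x = u + v) : -x = -v + -u := by
  symm
  apply neg_unique
  rw [hx, nuc1 hu, K_lip1 hv, addneg]

private lemma neg_decomp2 {x u v : Q} (hu : inNucleus u) (hv : inMoufangCenter v)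
    (hx : x = v + u) : -x = -u + -v := by
  symm
  apply neg_unique
  rw [hx, ← nuc2 (N_neg hu) (v + u) (-v), nuc2 hu v (-u), addneg, addz, addneg]

private lemma lip_all (x w : Q) : x + (-x + w) = w := by
  obtain ⟨u, v, hu, hv, hx1, hx2⟩ := NKLoop.nk_decomp x
  rw [neg_decomp1 hu hv hx1, hx1]
  rw [nuc2 (N_neg hu) (-v) w, nuc1 hu, K_lip1 hv, N_lip1 hu]

private lemma lip_all' (x w : Q) : -x + (x + w) = w := by
  apply cancel_left (a := x)
  rw [lip_all]
private lemma key_E {Q : Type u} [NKLoop Q] {u v u' v' z z' : Q}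
    (hu : inNucleus u) (hv : inMoufangCenter v)
    (hu' : inNucleus u') (hv' : inMoufangCenter v')
    (hzN : inNucleus z) (hzK : inMoufangCenter z)
    (hz'N : inNucleus z') (hz'K : inMoufangCenter z') :
    ((u + v) + ((-v + -v) + z)) + ((u' + v') + ((-v' + -v') + z'))
      = ((u + v) + (u' + v')) + (((-v + -v) + z) + ((-v' + -v') + z')) := by
  have hwN : inNucleus (z + z') := N_closed hzN hz'N
  have hmK : inMoufangCenter (-v + -v) := K_closed (K_neg hv) (K_neg hv)
  have hm'K : inMoufangCenter (-v' + -v') := K_closed (K_neg hv') (K_neg hv')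
  have hwK : inMoufangCenter (z + z') := K_closed hzK hz'K
  have hGK : inMoufangCenter (((-v + -v) + (-v' + -v')) + (z + z')) :=
    K_closed (K_closed hmK hm'K) hwK
  have hva : v + ((-v + -v) + z) = -v + z := by
    rw [K_Lneg2 hv, K_lip1 hv]
  have hv'b : v' + ((-v' + -v') + z') = -v' + z' := by
    rw [K_Lneg2 hv', K_lip1 hv']
  have hab : ((-v + -v) + z) + ((-v' + -v') + z')
      = ((-v + -v) + (-v' + -v')) + (z + z') := by
    calc ((-v + -v) + z) + ((-v' + -v') + z')
        = (-v + -v) + (z + ((-v' + -v') + z')) := nuc2 hzN _ _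
      _ = (-v + -v) + ((z + (-v' + -v')) + z') := by rw [nuc1 hzN (-v' + -v') z']
      _ = (-v + -v) + (((-v' + -v') + z) + z') := by rw [K_comm hzK (-v' + -v')]
      _ = (-v + -v) + ((-v' + -v') + (z + z')) := by rw [nuc2 hzN (-v' + -v') z']
      _ = ((-v + -v) + (-v' + -v')) + (z + z') := (nuc3 hwN _ _).symm
  have hIK : (v + v') + ((-v + -v) + (-v' + -v')) = -v + -v' := by
    have h1 : (-v + -v) + (-v' + -v') = (-v + -v') + (-v + -v') := K_neg hv (-v') (-v')
    rw [h1, ← K_neg_sum hv hv', K_lip1 (K_closed hv hv')]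
  have hL : ((u + v) + ((-v + -v) + z)) + ((u' + v') + ((-v' + -v') + z'))
      = u + ((-v + (-v' + (z + z'))) + u') := by
    calc ((u + v) + ((-v + -v) + z)) + ((u' + v') + ((-v' + -v') + z'))
        = (u + (v + ((-v + -v) + z))) + (u' + (v' + ((-v' + -v') + z'))) := by
          rw [nuc1 hu v ((-v + -v) + z), nuc1 hu' v' ((-v' + -v') + z')]
      _ = (u + (-v + z)) + (u' + (-v' + z')) := by rw [hva, hv'b]
      _ = u + ((-v + z) + (u' + (-v' + z'))) := nuc1 hu _ _
      _ = u + (-v + (z + (u' + (-v' + z')))) := by rw [nuc2 hzN (-v) (u' + (-v' + z'))]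
      _ = u + (-v + ((z + u') + (-v' + z'))) := by rw [nuc1 hzN u' (-v' + z')]
      _ = u + (-v + (((z + u') + -v') + z')) := by rw [nuc3 hz'N (z + u') (-v')]
      _ = u + (-v + ((z + (u' + -v')) + z')) := by rw [nuc2 hu' z (-v')]
      _ = u + (-v + ((z + (-v' + u')) + z')) := by rw [← K_comm (K_neg hv') u']
      _ = u + (-v + (((z + -v') + u') + z')) := by rw [← nuc1 hzN (-v') u']
      _ = u + (-v + (((-v' + z) + u') + z')) := by rw [K_comm hzK (-v')]
      _ = u + (-v + ((-v' + z) + (u' + z'))) := by rw [nuc2 hu' (-v' + z) z']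
      _ = u + (-v + ((-v' + z) + (z' + u'))) := by rw [← K_comm hz'K u']
      _ = u + (-v + (((-v' + z) + z') + u')) := by rw [← nuc3 hu' (-v' + z) z']
      _ = u + (-v + ((-v' + (z + z')) + u')) := by rw [nuc2 hzN (-v') z']
      _ = u + ((-v + (-v' + (z + z'))) + u') := by rw [← nuc3 hu' (-v) (-v' + (z + z'))]
  have hR : ((u + v) + (u' + v')) + (((-v + -v) + z) + ((-v' + -v') + z'))
      = u + ((-v + (-v' + (z + z'))) + u') := by
    calc ((u + v) + (u' + v')) + (((-v + -v) + z) + ((-v' + -v') + z'))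
        = ((u + v) + (v' + u')) + (((-v + -v) + z) + ((-v' + -v') + z')) := by
          rw [← K_comm hv' u']
      _ = (u + (v + (v' + u'))) + (((-v + -v) + z) + ((-v' + -v') + z')) := by
          rw [nuc1 hu v (v' + u')]
      _ = (u + ((v + v') + u')) + (((-v + -v) + z) + ((-v' + -v') + z')) := by
          rw [← nuc3 hu' v v']
      _ = (u + ((v + v') + u')) + (((-v + -v) + (-v' + -v')) + (z + z')) := by
          rw [hab]
      _ = u + (((v + v') + u') + (((-v + -v) + (-v' + -v')) + (z + z'))) :=
          nuc1 hu _ _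
      _ = u + ((v + v') + (u' + (((-v + -v) + (-v' + -v')) + (z + z')))) := by
          rw [nuc2 hu' (v + v') _]
      _ = u + ((v + v') + ((((-v + -v) + (-v' + -v')) + (z + z')) + u')) := by
          rw [← K_comm hGK u']
      _ = u + (((v + v') + (((-v + -v) + (-v' + -v')) + (z + z'))) + u') := by
          rw [← nuc3 hu' (v + v') _]
      _ = u + ((((v + v') + ((-v + -v) + (-v' + -v'))) + (z + z')) + u') := by
          rw [← nuc3 hwN (v + v') _]
      _ = u + (((-v + -v') + (z + z')) + u') := by rw [hIK]
      _ = u + ((-v + (-v' + (z + z'))) + u') := by rw [nuc3 hwN (-v) (-v')]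
  exact hL.trans hR.symm

end Lemmas
end NKAux
open NKAux
/- STATEMENT 10: Lemma 3.3.  If `f` is an endomorphism of an NK-loop
   satisfying condition (F) and `h(x) = -x + f(x)`, then `h` is a special
   endomorphism. -/
theorem h_special {Q : Type u} [NKLoop Q] (f : Q → Q)
    (hf : IsEndo f) (hF : SatisfiesF f)
    (h : Q → Q) (hh : ∀ x : Q, h x = -x + f x) :
    IsSpecial h := by
  have hfx : ∀ x : Q, f x = x + h x := fun x => by
    rw [hh x]; exact (lip_all x (f x)).symm
  have hK : ∀ x : Q, inMoufangCenter (h x) := fun x => by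
    rw [hh x]; exact (hF x).1
  refine ⟨?_, hK, ⟨2, ?_⟩, ?_⟩
  · -- `h` is an endomorphism
    intro x y
    obtain ⟨u, v, hu, hv, hx1, hx2⟩ := NKLoop.nk_decomp x
    obtain ⟨u', v', hu', hv', hy1, hy2⟩ := NKLoop.nk_decomp y
    obtain ⟨a, ha_eq⟩ : ∃ a, a = h x := ⟨h x, rfl⟩
    obtain ⟨b, hb_eq⟩ : ∃ b, b = h y := ⟨h y, rfl⟩
    have ha : inMoufangCenter a := ha_eq ▸ hK x
    have hb : inMoufangCenter b := hb_eq ▸ hK y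
    have hamx : (-v + -v) + ((v + v) + a) = a := by
      rw [K_Lneg2 hv, K_Lsq hv, K_lip2 hv, K_lip2 hv]
    have hamy : (-v' + -v') + ((v' + v') + b) = b := by
      rw [K_Lneg2 hv', K_Lsq hv', K_lip2 hv', K_lip2 hv']
    have keyx : x + f x = (u + u) + ((v + v) + a) := by
      rw [hfx x, ← ha_eq, hx1]
      calc (u + v) + ((u + v) + a)
          = (u + v) + (u + (v + a)) := by rw [nuc1 hu v a]
        _ = u + (v + (u + (v + a))) := nuc1 hu v (u + (v + a))
        _ = u + ((v + u) + (v + a)) := by rw [nuc2 hu v (v + a)]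
        _ = u + ((u + v) + (v + a)) := by rw [← K_comm hv u]
        _ = u + (u + (v + (v + a))) := by rw [nuc1 hu v (v + a)]
        _ = (u + u) + (v + (v + a)) := (nuc1 hu u (v + (v + a))).symm
        _ = (u + u) + ((v + v) + a) := by rw [K_Lsq hv a]
    have keyy : y + f y = (u' + u') + ((v' + v') + b) := by
      rw [hfx y, ← hb_eq, hy1]
      calc (u' + v') + ((u' + v') + b)
          = (u' + v') + (u' + (v' + b)) := by rw [nuc1 hu' v' b]
        _ = u' + (v' + (u' + (v' + b))) := nuc1 hu' v' (u' + (v' + b))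
        _ = u' + ((v' + u') + (v' + b)) := by rw [nuc2 hu' v' (v' + b)]
        _ = u' + ((u' + v') + (v' + b)) := by rw [← K_comm hv' u']
        _ = u' + (u' + (v' + (v' + b))) := by rw [nuc1 hu' v' (v' + b)]
        _ = (u' + u') + (v' + (v' + b)) := (nuc1 hu' u' (v' + (v' + b))).symm
        _ = (u' + u') + ((v' + v') + b) := by rw [K_Lsq hv' b]
    have hnx := (hF x).2
    rw [keyx] at hnx
    have hny := (hF y).2
    rw [keyy] at hny
    have huu : inNucleus (u + u) := N_closed hu hu
    have hu'u' : inNucleus (u' + u') := N_closed hu' hu'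
    have hzN : inNucleus ((v + v) + a) := by
      have h2 := N_closed (N_neg huu) hnx
      rwa [N_lip2 huu] at h2
    have hz'N : inNucleus ((v' + v') + b) := by
      have h2 := N_closed (N_neg hu'u') hny
      rwa [N_lip2 hu'u'] at h2
    have hzK : inMoufangCenter ((v + v) + a) := K_closed (K_closed hv hv) ha
    have hz'K : inMoufangCenter ((v' + v') + b) := K_closed (K_closed hv' hv') hb
    have E := key_E hu hv hu' hv' hzN hzK hz'N hz'K
    rw [hamx, hamy] at E
    rw [← hx1, ← hy1] at E
    rw [hh (x + y), hf x y, hfx x, hfx y, ← ha_eq, ← hb_eq, E, lip_all']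
  · -- quasicentrality on the Moufang center, with m = 2
    intro x hx
    have e2 : zsmulL (2 : ℤ) x + h x = (x + x) + h x := by
      show (x + (x + 0)) + h x = (x + x) + h x
      rw [addz]
    have hfxk : (x + x) + h x = x + f x := by
      rw [K_Lsq hx, ← hfx x]
    have hN : inNucleus ((x + x) + h x) := by rw [hfxk]; exact (hF x).2
    have hKc : inMoufangCenter ((x + x) + h x) :=
      K_closed (K_closed hx hx) (hK x)
    rw [e2]
    exact ⟨hKc, fun p q _ _ => ⟨nuc1 hN p q, nuc2 hN p q, nuc3 hN p q⟩⟩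
  · -- `h` maps the nucleus into the nucleus
    intro x hx
    have h1 : inNucleus (-x + (x + f x)) := N_closed (N_neg hx) (hF x).2
    rw [lip_all'] at h1
    rw [hh x]
    exact N_closed (N_neg hx) h1
end

section
/- Let (Q,+) be an NK-loop and let f, g be automorphisms of (Q,+) such that f, g, f⁻¹, g⁻¹ all satisfy condition (F), and suppose f∘g = g∘f. Define h, k, p, q : Q → Q by h(x) = -x + f(x), k(x) = -x + g(x), p(x) = -x + f⁻¹(x), and q(x) = -x + g⁻¹(x) for all x ∈ Q. Then the endomorphisms h, k, p, q commute pairwise under composition. -/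
/- Preamble: NK-loops, written additively.
   A loop is a set with `+`, a neutral element `0`, and unique left/right
   solvability.  An NK-loop is a loop in which every element decomposes as
   `x = u + v = v + u` with `u` in the nucleus and `v` in the Moufang center.
   Every NK-loop is a diassociative Moufang loop, so every element has a
   (uniquely determined) two-sided inverse `-x`, which we include in the
   structure. -/

universe u

section AuxProofs
variable {Q : Type u} [NKLoop Q]

private lemma zadd (x : Q) : 0 + x = x := NKLoop.zero_add x
private lemma addz (x : Q) : x + 0 = x := NKLoop.add_zero x
private lemma nac (x : Q) : -x + x = 0 := NKLoop.neg_add_cancel x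
private lemma anc (x : Q) : x + -x = 0 := NKLoop.add_neg_cancel x

private lemma qlcancel {a x y : Q} (h : a + x = a + y) : x = y := by
  obtain ⟨z, -, hu⟩ := NKLoop.exu_left a (a + y)
  exact (hu x h).trans (hu y rfl).symm

private lemma qrcancel {a x y : Q} (h : x + a = y + a) : x = y := by
  obtain ⟨z, -, hu⟩ := NKLoop.exu_right a (y + a)
  exact (hu x h).trans (hu y rfl).symm

private lemma eq_neg_r {a b : Q} (h : a + b = 0) : b = -a :=
  qlcancel (h.trans (anc a).symm)

private lemma qneg_neg (x : Q) : -(-x) = x :=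
  (eq_neg_r (nac x)).symm

private lemma nuc1 {n : Q} (hn : inNucleus n) (x y : Q) :
    (n + x) + y = n + (x + y) := (hn x y).1
private lemma nuc2 {n : Q} (hn : inNucleus n) (x y : Q) :
    (x + n) + y = x + (n + y) := (hn x y).2.1
private lemma nuc3 {n : Q} (hn : inNucleus n) (x y : Q) :
    (x + y) + n = x + (y + n) := (hn x y).2.2

private lemma nuc_neg {n : Q} (hn : inNucleus n) : inNucleus (-n) := by
  intro x y
  refine ⟨?_, ?_, ?_⟩
  · apply qlcancel (a := n)
    calc n + ((-n + x) + y) = (n + (-n + x)) + y := (nuc1 hn (-n + x) y).symm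
      _ = ((n + -n) + x) + y := by rw [← nuc1 hn (-n) x]
      _ = x + y := by rw [anc, zadd]
      _ = (n + -n) + (x + y) := by rw [anc, zadd]
      _ = n + (-n + (x + y)) := nuc1 hn (-n) (x + y)
  · have hx : (x + -n) + n = x := by rw [nuc3 hn x (-n), nac, addz]
    calc (x + -n) + y = (x + -n) + ((n + -n) + y) := by rw [anc, zadd]
      _ = (x + -n) + (n + (-n + y)) := by rw [nuc1 hn (-n) y]
      _ = ((x + -n) + n) + (-n + y) := (nuc2 hn (x + -n) (-n + y)).symm
      _ = x + (-n + y) := by rw [hx]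
  · apply qrcancel (a := n)
    calc ((x + y) + -n) + n = (x + y) + (-n + n) := nuc3 hn (x + y) (-n)
      _ = x + y := by rw [nac, addz]
      _ = x + ((y + -n) + n) := by rw [nuc3 hn y (-n), nac, addz]
      _ = (x + (y + -n)) + n := (nuc3 hn x (y + -n)).symm

private lemma nuc_add {m n : Q} (hm : inNucleus m) (hn : inNucleus n) :
    inNucleus (m + n) := by
  intro x y
  refine ⟨?_, ?_, ?_⟩
  · rw [nuc1 hm n x, nuc1 hm (n + x) y, nuc1 hn x y, nuc1 hm n (x + y)]
  · rw [← nuc2 hm x n, nuc2 hn (x + m) y, nuc2 hm x (n + y), nuc1 hm n y]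
  · rw [← nuc2 hm (x + y) n, nuc3 hm x y, nuc3 hn x (y + m), nuc2 hm y n]

private lemma k_la {v : Q} (hv : inMoufangCenter v) (y : Q) :
    (v + v) + y = v + (v + y) := by
  have h := hv 0 y
  rwa [zadd, addz] at h

private lemma k_comm {v : Q} (hv : inMoufangCenter v) (z : Q) :
    v + z = z + v := by
  obtain ⟨t, ht, -⟩ := NKLoop.exu_left v z
  have h1 := hv t 0
  rw [addz, addz] at h1
  have h2 := k_la hv t
  rw [← ht, ← h2, h1]

private lemma k_lip {v : Q} (hv : inMoufangCenter v) (y : Q) :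
    v + (-v + y) = y := by
  have h1 := hv (-v) y
  rw [anc, zadd] at h1
  rw [k_la hv (-v + y)] at h1
  exact qlcancel h1

private lemma k_rip' {v : Q} (hv : inMoufangCenter v) (y : Q) :
    v + (y + -v) = y := by
  have h1 := hv y (-v)
  rw [anc, addz] at h1
  rw [k_la hv (y + -v)] at h1
  exact qlcancel h1

private lemma k_ripc {v : Q} (hv : inMoufangCenter v) (y : Q) :
    (y + -v) + v = y := by
  rw [← k_comm hv (y + -v)]
  exact k_rip' hv y

private lemma k_two_comm {v : Q} (hv : inMoufangCenter v) (z : Q) :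
    (v + v) + z = z + (v + v) := by
  have h1 := hv (-v + z) v
  rw [k_lip hv z] at h1
  have h2 : (-v + z) + v = z := by
    rw [← k_comm hv (-v + z)]; exact k_lip hv z
  rw [h2] at h1
  exact h1

private lemma neg_add_nuc {n : Q} (hn : inNucleus n) (y : Q) :
    -(n + y) = -y + -n := by
  have h : (n + y) + (-y + -n) = 0 := by
    rw [nuc1 hn y (-y + -n), ← nuc3 (nuc_neg hn) y (-y), anc y, zadd]
    exact anc n
  exact (eq_neg_r h).symm

private lemma lip (y z : Q) : y + (-y + z) = z := by
  obtain ⟨u, w, hu, hw, hyd, -⟩ := NKLoop.nk_decomp y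
  rw [hyd, neg_add_nuc hu w]
  rw [nuc2 (nuc_neg hu) (-w) z]
  rw [nuc1 hu w (-w + (-u + z))]
  rw [k_lip hw (-u + z)]
  rw [← nuc1 hu (-u) z, anc, zadd]

private lemma lip' (y z : Q) : -y + (y + z) = z := by
  have h := lip (-y) z
  rwa [qneg_neg] at h

private lemma rip (z y : Q) : (z + -y) + y = z := by
  obtain ⟨u, w, hu, hw, hyd, -⟩ := NKLoop.nk_decomp y
  rw [hyd, neg_add_nuc hu w]
  rw [← nuc3 (nuc_neg hu) z (-w)]
  rw [nuc2 (nuc_neg hu) (z + -w) (u + w)]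
  rw [← nuc1 (nuc_neg hu) u w, nac, zadd]
  exact k_ripc hw z

private lemma rip' (z y : Q) : (z + y) + -y = z := by
  have h := rip z (-y)
  rwa [qneg_neg] at h

private lemma aip (y z : Q) : -(y + z) = -z + -y := by
  have h1 : -(y + z) + y = -z := by
    have h0 := lip' (y + z) (-z)
    rwa [rip' y z] at h0
  have h2 := rip' (-(y + z)) y
  rw [h1] at h2
  exact h2.symm

private lemma endo_zero {f : Q → Q} (hf : IsEndo f) : f 0 = 0 := by
  have h := hf 0 0
  rw [zadd] at h
  have h2 : f 0 + f 0 = f 0 + 0 := by rw [addz]; exact h.symm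
  exact qlcancel h2

private lemma endo_neg {f : Q → Q} (hf : IsEndo f) (x : Q) :
    f (-x) = -(f x) := by
  have h : f x + f (-x) = 0 := by rw [← hf x (-x), anc, endo_zero hf]
  exact eq_neg_r h

private lemma preserve_N {f : Q → Q} (hf : IsEndo f) (hs : Function.Surjective f)
    {n : Q} (hn : inNucleus n) : inNucleus (f n) := by
  have e : ∀ p q : Q, f p + f q = f (p + q) := fun p q => (hf p q).symm
  intro x y
  obtain ⟨x', rfl⟩ := hs x
  obtain ⟨y', rfl⟩ := hs y
  refine ⟨?_, ?_, ?_⟩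
  · rw [e n x', e (n + x') y', e x' y', e n (x' + y')]
    exact congrArg f (hn x' y').1
  · rw [e x' n, e (x' + n) y', e n y', e x' (n + y')]
    exact congrArg f (hn x' y').2.1
  · rw [e x' y', e (x' + y') n, e y' n, e x' (y' + n)]
    exact congrArg f (hn x' y').2.2

private lemma preserve_K {f : Q → Q} (hf : IsEndo f) (hs : Function.Surjective f)
    {v : Q} (hv : inMoufangCenter v) : inMoufangCenter (f v) := by
  have e : ∀ p q : Q, f p + f q = f (p + q) := fun p q => (hf p q).symm
  intro x y
  obtain ⟨x', rfl⟩ := hs x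
  obtain ⟨y', rfl⟩ := hs y
  rw [e v v, e x' y', e (v + v) (x' + y'), e v x', e v y', e (v + x') (v + y')]
  exact congrArg f (hv x' y')

private lemma decomp_piece (w : Q) {m m' w' : Q} (hm : inNucleus m)
    (hm' : inNucleus m') (hw' : inMoufangCenter w') :
    -(m + w) + (m' + w') = (-w + w') + (-m + m') := by
  rw [neg_add_nuc hm w]
  rw [nuc2 (nuc_neg hm) (-w) (m' + w')]
  rw [← nuc1 (nuc_neg hm) m' w']
  rw [← k_comm hw' (-m + m')]
  rw [← nuc3 (nuc_add (nuc_neg hm) hm') (-w) w']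

private lemma assemble {n1 n2 QQ : Q} (hn1 : inNucleus n1) (hn2 : inNucleus n2)
    (hQ : inMoufangCenter QQ) (P : Q) :
    (P + n1) + (QQ + n2) = (P + QQ) + (n1 + n2) := by
  calc (P + n1) + (QQ + n2) = P + (n1 + (QQ + n2)) := nuc2 hn1 P (QQ + n2)
    _ = P + ((n1 + QQ) + n2) := by rw [← nuc1 hn1 QQ n2]
    _ = P + ((QQ + n1) + n2) := by rw [← k_comm hQ n1]
    _ = P + (QQ + (n1 + n2)) := by rw [nuc2 hn1 QQ n2]
    _ = (P + QQ) + (n1 + n2) := (nuc3 (nuc_add hn1 hn2) P QQ).symm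

private lemma mainK_core {x a b c : Q} (hx : inMoufangCenter x)
    (hn1 : inNucleus (x + a)) (hn2 : inNucleus (x + b))
    (haK : inMoufangCenter a) :
    (-b + x) + (-a + c) = (-a + x) + (-b + c) := by
  have eb : -b = -(x + b) + x := by
    rw [aip]; exact (rip (-b) x).symm
  have ea : -a = -(x + a) + x := by
    rw [aip]; exact (rip (-a) x).symm
  have L : (-b + x) + (-a + c)
      = (-(x + b) + -(x + a)) + ((x + x) + (x + c)) := by
    rw [eb, ea]
    rw [nuc1 (nuc_neg hn2) x x, nuc1 (nuc_neg hn1) x c]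
    rw [nuc1 (nuc_neg hn2) (x + x) (-(x + a) + (x + c))]
    rw [← nuc2 (nuc_neg hn1) (x + x) (x + c)]
    rw [k_two_comm hx (-(x + a))]
    rw [nuc1 (nuc_neg hn1) (x + x) (x + c)]
    rw [← nuc1 (nuc_neg hn2) (-(x + a)) ((x + x) + (x + c))]
  have R : (-a + x) + (-b + c)
      = (-(x + a) + -(x + b)) + ((x + x) + (x + c)) := by
    rw [ea, eb]
    rw [nuc1 (nuc_neg hn1) x x, nuc1 (nuc_neg hn2) x c]
    rw [nuc1 (nuc_neg hn1) (x + x) (-(x + b) + (x + c))]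
    rw [← nuc2 (nuc_neg hn2) (x + x) (x + c)]
    rw [k_two_comm hx (-(x + b))]
    rw [nuc1 (nuc_neg hn2) (x + x) (x + c)]
    rw [← nuc1 (nuc_neg hn1) (-(x + b)) ((x + x) + (x + c))]
  rw [L, R]
  have hcomm2 : -(x + b) + -(x + a) = -(x + a) + -(x + b) := by
    rw [← aip (x + a) (x + b), ← aip (x + b) (x + a)]
    have ha := hx a b
    have hb := hx b a
    have h1 : (x + a) + (x + b) = (x + b) + (x + a) := by
      rw [← ha, ← hb, k_comm haK b]
    rw [h1]
  rw [hcomm2]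

private lemma npart_core {u A B C : Q} (hU : inNucleus u) (hA : inNucleus A)
    (hB : inNucleus B) (hz1K : inMoufangCenter (-u + A)) :
    (-B + u) + (-A + C) = (-A + u) + (-B + C) := by
  have r1 : -B + u = -(-u + B) := by rw [aip, qneg_neg]
  have r2 : -A + u = -(-u + A) := by rw [aip, qneg_neg]
  rw [r1, r2]
  have hz1N : inNucleus (-u + A) := nuc_add (nuc_neg hU) hA
  have hz2N : inNucleus (-u + B) := nuc_add (nuc_neg hU) hB
  have h13 : (-u + A) + (-A + C) = -u + C := by
    rw [nuc1 (nuc_neg hU) A (-A + C), lip A C]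
  have h24 : (-u + B) + (-B + C) = -u + C := by
    rw [nuc1 (nuc_neg hU) B (-B + C), lip B C]
  have h0 := lip' (-u + B) (-B + C)
  rw [h24, ← h13] at h0
  rw [← h0]
  have key : -(-u + A) + (-(-u + B) + ((-u + A) + (-A + C)))
      = -(-u + B) + (-A + C) := by
    rw [← nuc1 (nuc_neg hz1N) (-(-u + B)) ((-u + A) + (-A + C))]
    rw [← nuc1 (nuc_add (nuc_neg hz1N) (nuc_neg hz2N)) (-u + A) (-A + C)]
    rw [nuc1 (nuc_neg hz1N) (-(-u + B)) (-u + A)]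
    rw [← k_comm hz1K (-(-u + B))]
    rw [← nuc2 hz1N (-(-u + A)) (-(-u + B))]
    rw [nac (-u + A), zadd]
  exact key.symm

private lemma main_commute (f g : Q → Q) (hf : IsEndo f) (hg : IsEndo g)
    (hfs : Function.Surjective f) (hgs : Function.Surjective g)
    (hFf : SatisfiesF f) (hFg : SatisfiesF g)
    (hc : ∀ z, f (g z) = g (f z)) (x : Q) :
    -(-x + g x) + f (-x + g x) = -(-x + f x) + g (-x + f x) := by
  have e1 : -(-x + g x) = -(g x) + x := by rw [aip, qneg_neg]
  have e2 : f (-x + g x) = -(f x) + f (g x) := by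
    rw [hf (-x) (g x), endo_neg hf x]
  have e3 : -(-x + f x) = -(f x) + x := by rw [aip, qneg_neg]
  have e4 : g (-x + f x) = -(g x) + f (g x) := by
    rw [hg (-x) (f x), endo_neg hg x, ← hc x]
  rw [e1, e2, e3, e4]
  obtain ⟨U, W, hU, hW, hxd, -⟩ := NKLoop.nk_decomp x
  rw [hxd]
  rw [hg U W, hf U W, hf (g U) (g W)]
  have hUA : inNucleus (f U) := preserve_N hf hfs hU
  have hUB : inNucleus (g U) := preserve_N hg hgs hU
  have hUC : inNucleus (f (g U)) := preserve_N hf hfs (preserve_N hg hgs hU)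
  have hWc : inMoufangCenter (f (g W)) := preserve_K hf hfs (preserve_K hg hgs hW)
  rw [decomp_piece (g W) hUB hU hW, decomp_piece (f W) hUA hUC hWc,
      decomp_piece (f W) hUA hU hW, decomp_piece (g W) hUB hUC hWc]
  have hQL : inMoufangCenter (-(f W) + f (g W)) := by
    have hh := (hFg (f W)).1
    rwa [← hc W] at hh
  have hQR : inMoufangCenter (-(g W) + f (g W)) := (hFf (g W)).1
  rw [assemble (nuc_add (nuc_neg hUB) hU) (nuc_add (nuc_neg hUA) hUC) hQL (-(g W) + W),
      assemble (nuc_add (nuc_neg hUA) hU) (nuc_add (nuc_neg hUB) hUC) hQR (-(f W) + W)]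
  have kpart : (-(g W) + W) + (-(f W) + f (g W))
      = (-(f W) + W) + (-(g W) + f (g W)) :=
    mainK_core hW (hFf W).2 (hFg W).2 (preserve_K hf hfs hW)
  have np : (-(g U) + U) + (-(f U) + f (g U))
      = (-(f U) + U) + (-(g U) + f (g U)) :=
    npart_core hU hUA hUB (hFf U).1
  rw [kpart, np]

private lemma pair_comm (f' g' : Q → Q) (hf' : IsEndo f') (hg' : IsEndo g')
    (hfs : Function.Surjective f') (hgs : Function.Surjective g')
    (hF' : SatisfiesF f') (hG' : SatisfiesF g')
    (hc : ∀ z, f' (g' z) = g' (f' z))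
    (h' k' : Q → Q) (hh' : ∀ x : Q, h' x = -x + f' x)
    (hk' : ∀ x : Q, k' x = -x + g' x) : h' ∘ k' = k' ∘ h' := by
  funext x
  show h' (k' x) = k' (h' x)
  rw [hh' (k' x), hk' x, hk' (h' x), hh' x]
  exact main_commute f' g' hf' hg' hfs hgs hF' hG' hc x

end AuxProofs


/- STATEMENT 13: Lemma 3.5(4).  Let `f, g` be automorphisms of an NK-loop
   such that `f, g, f⁻¹, g⁻¹` satisfy condition (F) and `f ∘ g = g ∘ f`, and
   set `h(x) = -x + f(x)`, `k(x) = -x + g(x)`, `p(x) = -x + f⁻¹(x)`,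
   `q(x) = -x + g⁻¹(x)`.  Then `h, k, p, q` commute pairwise. -/
theorem aut_F_pairwise_commute {Q : Type u} [NKLoop Q] (f g fi gi : Q → Q)
    (hf : IsEndo f) (hfbij : Function.Bijective f)
    (hg : IsEndo g) (hgbij : Function.Bijective g)
    (hfi₁ : Function.LeftInverse fi f) (hfi₂ : Function.RightInverse fi f)
    (hgi₁ : Function.LeftInverse gi g) (hgi₂ : Function.RightInverse gi g)
    (hF : SatisfiesF f) (hG : SatisfiesF g)
    (hFi : SatisfiesF fi) (hGi : SatisfiesF gi)
    (hcomm : f ∘ g = g ∘ f)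
    (h k p q : Q → Q)
    (hh : ∀ x : Q, h x = -x + f x) (hk : ∀ x : Q, k x = -x + g x)
    (hp : ∀ x : Q, p x = -x + fi x) (hq : ∀ x : Q, q x = -x + gi x) :
    h ∘ k = k ∘ h ∧ h ∘ p = p ∘ h ∧ h ∘ q = q ∘ h ∧
    k ∘ p = p ∘ k ∧ k ∘ q = q ∘ k ∧ p ∘ q = q ∘ p := by
  have hfi_endo : IsEndo fi := fun x y => hfbij.injective (by
    rw [hfi₂ (x + y), hf (fi x) (fi y), hfi₂ x, hfi₂ y])
  have hgi_endo : IsEndo gi := fun x y => hgbij.injective (by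
    rw [hgi₂ (x + y), hg (gi x) (gi y), hgi₂ x, hgi₂ y])
  have hfi_surj : Function.Surjective fi := fun y => ⟨f y, hfi₁ y⟩
  have hgi_surj : Function.Surjective gi := fun y => ⟨g y, hgi₁ y⟩
  have c_fg : ∀ z, f (g z) = g (f z) := fun z => congrFun hcomm z
  have c_ffi : ∀ z, f (fi z) = fi (f z) := fun z => (hfi₂ z).trans (hfi₁ z).symm
  have c_ggi : ∀ z, g (gi z) = gi (g z) := fun z => (hgi₂ z).trans (hgi₁ z).symm
  have c_fgi : ∀ z, f (gi z) = gi (f z) := by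
    intro z
    have e := c_fg (gi z)
    rw [hgi₂ z] at e
    have e2 := congrArg gi e
    rw [hgi₁ (f (gi z))] at e2
    exact e2.symm
  have c_gfi : ∀ z, g (fi z) = fi (g z) := by
    intro z
    have e := c_fg (fi z)
    rw [hfi₂ z] at e
    have e2 := congrArg fi e
    rw [hfi₁ (g (fi z))] at e2
    exact e2
  have c_figi : ∀ z, fi (gi z) = gi (fi z) := by
    intro z
    apply hfbij.injective
    rw [hfi₂ (gi z), c_fgi (fi z), hfi₂ z]
  refine ⟨?_, ?_, ?_, ?_, ?_, ?_⟩
  · exact pair_comm f g hf hg hfbij.surjective hgbij.surjective hF hG c_fg h k hh hk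
  · exact pair_comm f fi hf hfi_endo hfbij.surjective hfi_surj hF hFi c_ffi h p hh hp
  · exact pair_comm f gi hf hgi_endo hfbij.surjective hgi_surj hF hGi c_fgi h q hh hq
  · exact pair_comm g fi hg hfi_endo hgbij.surjective hfi_surj hG hFi c_gfi k p hk hp
  · exact pair_comm g gi hg hgi_endo hgbij.surjective hgi_surj hG hGi c_ggi k q hk hq
  · exact pair_comm fi gi hfi_endo hgi_endo hfi_surj hgi_surj hFi hGi c_figi p q hp hq
end
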